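/- The polynomial φ(x) = x^25 − 5x^24 + 15x^23 − 5x^22 − 380x^21 + 1290x^20 − 4500x^19 − 28080x^18 + 183510x^17 + 74910x^16 − 3033150x^15 + 4181370x^14 + 27399420x^13 − 48219480x^12 − 124127340x^11 + 266321580x^10 + 466602765x^9 − 592235505x^8 − 905951965x^7 + 1232529455x^6 + 2423285640x^5 + 664599470x^4 − 814165000x^3 − 517891860x^2 − 58209720x + 2436924 is irreducible in Q[x]. -/
import Mathlib


open Polynomial

/-- The reduced defining polynomial of the degree 25 Hurwitz number field attached to the
Hurwitz parameter `h = (S_5, (2111,5), (4,1))` and specialization polynomial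
`τ(t) = (t+2)t(t−1)(t−2)`. -/
noncomputable def phi : Polynomial ℚ :=
  X ^ 25 - 5 * X ^ 24 + 15 * X ^ 23 - 5 * X ^ 22 - 380 * X ^ 21 + 1290 * X ^ 20
    - 4500 * X ^ 19 - 28080 * X ^ 18 + 183510 * X ^ 17 + 74910 * X ^ 16
    - 3033150 * X ^ 15 + 4181370 * X ^ 14 + 27399420 * X ^ 13 - 48219480 * X ^ 12
    - 124127340 * X ^ 11 + 266321580 * X ^ 10 + 466602765 * X ^ 9 - 592235505 * X ^ 8
    - 905951965 * X ^ 7 + 1232529455 * X ^ 6 + 2423285640 * X ^ 5 + 664599470 * X ^ 4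
    - 814165000 * X ^ 3 - 517891860 * X ^ 2 - 58209720 * X + 2436924

/-- Integer version of `phi`. -/
noncomputable def phiZ : Polynomial ℤ :=
  X ^ 25 - 5 * X ^ 24 + 15 * X ^ 23 - 5 * X ^ 22 - 380 * X ^ 21 + 1290 * X ^ 20
    - 4500 * X ^ 19 - 28080 * X ^ 18 + 183510 * X ^ 17 + 74910 * X ^ 16
    - 3033150 * X ^ 15 + 4181370 * X ^ 14 + 27399420 * X ^ 13 - 48219480 * X ^ 12
    - 124127340 * X ^ 11 + 266321580 * X ^ 10 + 466602765 * X ^ 9 - 592235505 * X ^ 8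
    - 905951965 * X ^ 7 + 1232529455 * X ^ 6 + 2423285640 * X ^ 5 + 664599470 * X ^ 4
    - 814165000 * X ^ 3 - 517891860 * X ^ 2 - 58209720 * X + 2436924

/-- `phiZ (X + 1) = 5 * hAux + X ^ 25`. -/
noncomputable def hAux : Polynomial ℤ :=
  4 * X ^ 24
    + 39 * X ^ 23
    + 252 * X ^ 22
    + 1167 * X ^ 21
    + 3744 * X ^ 20
    + 6241 * X ^ 19
    - 19600 * X ^ 18
    - 232308 * X ^ 17
    - 1054964 * X ^ 16
    - 2923888 * X ^ 15
    - 6933312 * X ^ 14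
    - 17290824 * X ^ 13
    - 21639456 * X ^ 12
    + 54423864 * X ^ 11
    + 253544144 * X ^ 10
    + 424540132 * X ^ 9
    + 697621104 * X ^ 8
    + 1834609452 * X ^ 7
    + 3635920272 * X ^ 6
    + 4740909900 * X ^ 5
    + 5620524480 * X ^ 4
    + 6807340980 * X ^ 3
    + 5828266080 * X ^ 2
    + 2569110480 * X
    + 404749872

noncomputable def gZ : Polynomial ℤ := C 5 * hAux + X ^ 25

lemma hAux_natDegree_le : hAux.natDegree ≤ 24 := by
  unfold hAux
  compute_degree

lemma gZ_coeff_25 : gZ.coeff 25 = 1 := by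
  rw [gZ, coeff_add, coeff_C_mul, coeff_eq_zero_of_natDegree_lt (lt_of_le_of_lt hAux_natDegree_le (by norm_num)), coeff_X_pow]
  norm_num

lemma gZ_natDegree : gZ.natDegree = 25 := by
  have h1 : gZ.natDegree ≤ 25 := by
    refine natDegree_add_le_of_degree_le ?_ (natDegree_X_pow_le 25)
    exact (natDegree_C_mul_le _ _).trans (hAux_natDegree_le.trans (by norm_num))
  have h2 : gZ.coeff 25 ≠ 0 := by rw [gZ_coeff_25]; norm_num
  exact le_antisymm h1 (le_natDegree_of_ne_zero h2)

lemma hAux_coeff_zero : hAux.coeff 0 = 404749872 := by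
  unfold hAux
  simp [coeff_X_pow, coeff_one]

lemma gZ_isEisensteinAt : gZ.IsEisensteinAt (Ideal.span {(5 : ℤ)}) := by
  constructor
  · rw [leadingCoeff, gZ_natDegree, gZ_coeff_25]
    intro h
    rw [Ideal.mem_span_singleton] at h
    norm_num at h
  · intro n hn
    rw [gZ_natDegree] at hn
    rw [gZ, coeff_add, coeff_X_pow, if_neg hn.ne, add_zero, coeff_C_mul]
    exact Ideal.mem_span_singleton.mpr ⟨hAux.coeff n, rfl⟩
  · rw [gZ, coeff_add, coeff_C_mul, hAux_coeff_zero, coeff_X_pow]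
    rw [Ideal.span_singleton_pow, Ideal.mem_span_singleton]
    norm_num

lemma gZ_irreducible : Irreducible gZ := by
  refine gZ_isEisensteinAt.irreducible ?_ ?_ ?_
  · rw [Ideal.span_singleton_prime (by norm_num)]
    norm_num
  · apply Polynomial.Monic.isPrimitive
    rw [Monic, leadingCoeff, gZ_natDegree, gZ_coeff_25]
  · rw [gZ_natDegree]; norm_num

lemma aeval_phiZ : (algEquivAevalXAddC (1 : ℤ)) phiZ = gZ := by
  show aeval (X + C 1) phiZ = gZ
  rw [phiZ, gZ, hAux]
  simp only [map_add, map_sub, map_mul, map_pow, map_ofNat, aeval_X, aeval_natCast, aeval_one,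
    map_one]
  ring

lemma phiZ_irreducible : Irreducible phiZ := by
  have := gZ_irreducible
  rw [← aeval_phiZ] at this
  exact (MulEquiv.irreducible_iff (algEquivAevalXAddC (1 : ℤ)).toMulEquiv).mp this

lemma phiZ_monic : phiZ.Monic := by
  unfold phiZ
  monicity!

lemma phi_eq_map : phi = phiZ.map (Int.castRingHom ℚ) := by
  rw [phi, phiZ]
  simp

/-- The polynomial `φ` is irreducible in `ℚ[x]`. -/
theorem statement3 : Irreducible phi := by
  rw [phi_eq_map]
  exact (Polynomial.IsPrimitive.Int.irreducible_iff_irreducible_map_cast phiZ_monic.isPrimitive).mp phiZ_irreducible
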